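/- arXiv:1603.06288 — 3 statements merged into one kernel-verified Lean document; each statement's English description precedes it below -/
import Mathlib

section
/- Let s ≥ 1 be an integer, let κ₀ > 0, η > 0 be reals, and let φ ∈ ℝ satisfy φ² ≤ 1. Let 𝟙 ∈ ℝˢ be the all-ones vector and Iₛ the s×s identity matrix. Then κ₀ − (κ₀ φ)² · 𝟙ᵀ (κ₀ 𝟙𝟙ᵀ + η² Iₛ)⁻¹ 𝟙 ≤ κ₀ (1 − φ²) + η²/s. -/
/-!
The noisy Gram matrix `κ₀ J + η² I` is positive definite and has `𝟙` as an eigenvector with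
eigenvalue `κ₀ s + η²`, so `𝟙ᵀ (κ₀ J + η² I)⁻¹ 𝟙 = s / (κ₀ s + η²)`. The left-hand side is then
`κ₀ (1 - φ²) + κ₀ φ² η² / (κ₀ s + η²)`, and the last term is at most `η² / s` because `φ² ≤ 1`.
-/

open Matrix

namespace Matrix

variable {n : Type*} [Fintype n] [DecidableEq n]

theorem inv_mulVec_eq_inv_smul_of_mulVec_eq_smul {K : Type*} [Field K] {A : Matrix n n K}
    (hA : IsUnit A) {v : n → K} {c : K} (hc : c ≠ 0) (hv : A *ᵥ v = c • v) :
    A⁻¹ *ᵥ v = c⁻¹ • v := by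
  have := hA.invertible
  refine inv_mulVec_eq_vec ?_
  rw [mulVec_smul, hv, smul_smul, inv_mul_cancel₀ hc, one_smul]

theorem posDef_smul_vecMulVec_self_add_smul_one {κ σ : ℝ} (hκ : 0 ≤ κ) (hσ : 0 < σ)
    (v : n → ℝ) : (κ • vecMulVec v v + σ • (1 : Matrix n n ℝ)).PosDef := by
  have hvv : (vecMulVec v v).PosSemidef := by simpa using posSemidef_vecMulVec_self_star v
  exact PosDef.posSemidef_add (hvv.smul hκ) (PosDef.one.smul hσ)

theorem smul_vecMulVec_one_one_add_smul_one_mulVec_one (κ σ : ℝ) :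
    (κ • vecMulVec 1 1 + σ • (1 : Matrix n n ℝ)) *ᵥ 1 = (κ * Fintype.card n + σ) • 1 := by
  rw [add_mulVec, smul_mulVec, smul_mulVec, vecMulVec_mulVec, one_dotProduct_one, op_smul_eq_smul,
    one_mulVec, add_smul, smul_smul]

end Matrix

theorem sub_sq_mul_div_le_mul_one_sub_sq_add_div {κ σ φ m : ℝ} (hκ : 0 ≤ κ) (hσ : 0 < σ)
    (hm : 0 < m) (hφ : φ ^ 2 ≤ 1) :
    κ - (κ * φ) ^ 2 * (m / (κ * m + σ)) ≤ κ * (1 - φ ^ 2) + σ / m := by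
  have hden : 0 < κ * m + σ := by positivity
  have hsplit : κ - (κ * φ) ^ 2 * (m / (κ * m + σ))
      = κ * (1 - φ ^ 2) + κ * φ ^ 2 * σ / (κ * m + σ) := by
    field_simp; ring
  have hgain : κ * φ ^ 2 * σ / (κ * m + σ) ≤ σ / m := by
    rw [div_le_div_iff₀ hden hm]
    nlinarith [mul_le_mul_of_nonneg_left hφ (by positivity : 0 ≤ κ * σ * m)]
  linarith

/-- **Core matrix inequality of Lemma 7.**
Let `s ≥ 1`, `κ₀ > 0`, `η > 0`, `φ² ≤ 1`, let `J = 𝟙𝟙ᵀ` be the `s × s` all-ones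
matrix and `𝟙` the all-ones vector. Then
`κ₀ − (κ₀ φ)² · 𝟙ᵀ (κ₀ J + η² I)⁻¹ 𝟙 ≤ κ₀ (1 − φ²) + η²/s`. -/
theorem posterior_variance_matrix_ineq
    (s : ℕ) (hs : 1 ≤ s) (κ₀ η : ℝ) (hκ : 0 < κ₀) (hη : 0 < η)
    (φ : ℝ) (hφ : φ ^ 2 ≤ 1)
    (J : Matrix (Fin s) (Fin s) ℝ) (hJ : ∀ i j, J i j = 1)
    (ones : Fin s → ℝ) (hones : ∀ i, ones i = 1) :
    κ₀ - (κ₀ * φ) ^ 2 *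
        dotProduct ones
          (Matrix.mulVec (κ₀ • J + η ^ 2 • (1 : Matrix (Fin s) (Fin s) ℝ))⁻¹ ones)
      ≤ κ₀ * (1 - φ ^ 2) + η ^ 2 / (s : ℝ) := by
  obtain rfl : ones = 1 := funext hones
  obtain rfl : J = vecMulVec (1 : Fin s → ℝ) 1 := Matrix.ext fun i j => by simp [hJ]
  have hη2 : 0 < η ^ 2 := by positivity
  have hs_pos : (0 : ℝ) < s := by exact_mod_cast hs
  have heig : κ₀ * s + η ^ 2 ≠ 0 := by positivity
  rw [inv_mulVec_eq_inv_smul_of_mulVec_eq_smul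
      (posDef_smul_vecMulVec_self_add_smul_one hκ.le hη2 (1 : Fin s → ℝ)).isUnit heig
      (by simpa using smul_vecMulVec_one_one_add_smul_one_mulVec_one (n := Fin s) κ₀ (η ^ 2)),
    dotProduct_smul, one_dotProduct_one, Fintype.card_fin, smul_eq_mul, ← div_eq_inv_mul]
  exact sub_sq_mul_div_le_mul_one_sub_sq_add_div hκ.le hη2 hs_pos hφ
end

section
/- Let s ≥ 1 be an integer, and let κ₀ > 0, η > 0, h > 0, D ≥ 0 be reals. Set φ = exp(−D²/(2h²)). Then κ₀ − κ₀² φ² s / (η² + κ₀ s) ≤ (κ₀/h²) D² + η²/s. -/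
/-!
Writing `ρ = exp(−D²/(2h²))` for the correlation between the two points, the posterior variance
splits as `κ₀ η² / (η² + κ₀ s) + κ₀² (1 − ρ²) s / (η² + κ₀ s)`. Dropping `η²` or `κ₀ s` from the
common denominator bounds the two terms by `η²/s` and `κ₀ (1 − ρ²)`, and `1 − ρ² = 1 − e^{−D²/h²}`
is at most `D²/h²`.
-/

open Real

theorem posterior_variance_le_of_sq_le_one {κ₀ ρ η s : ℝ} (hκ : 0 < κ₀) (hs : 0 < s)
    (hρ : ρ ^ 2 ≤ 1) :
    κ₀ - κ₀ ^ 2 * ρ ^ 2 * s / (η ^ 2 + κ₀ * s) ≤ κ₀ * (1 - ρ ^ 2) + η ^ 2 / s := by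
  have hden : 0 < η ^ 2 + κ₀ * s := by positivity
  have hsplit : κ₀ - κ₀ ^ 2 * ρ ^ 2 * s / (η ^ 2 + κ₀ * s)
      = κ₀ * η ^ 2 / (η ^ 2 + κ₀ * s) + κ₀ * (1 - ρ ^ 2) * (κ₀ * s / (η ^ 2 + κ₀ * s)) := by
    field_simp
    ring
  have hnoise : κ₀ * η ^ 2 / (η ^ 2 + κ₀ * s) ≤ η ^ 2 / s := by
    rw [div_le_div_iff₀ hden hs]
    nlinarith [sq_nonneg η, sq_nonneg (η ^ 2)]
  have hfrac : κ₀ * s / (η ^ 2 + κ₀ * s) ≤ 1 :=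
    div_le_one_of_le₀ (le_add_of_nonneg_left (sq_nonneg η)) hden.le
  have hcorr : κ₀ * (1 - ρ ^ 2) * (κ₀ * s / (η ^ 2 + κ₀ * s)) ≤ κ₀ * (1 - ρ ^ 2) :=
    mul_le_of_le_one_right (by nlinarith) hfrac
  rw [hsplit]
  linarith

theorem exp_neg_sq_div_two_sq_sq (D h : ℝ) :
    exp (-D ^ 2 / (2 * h ^ 2)) ^ 2 = exp (-(D ^ 2 / h ^ 2)) := by
  rw [← exp_nat_mul]
  congr 1
  by_cases hh : h = 0
  · simp [hh]
  · field_simp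
    ring

theorem sq_exp_neg_sq_div_two_sq_le_one (D h : ℝ) : exp (-D ^ 2 / (2 * h ^ 2)) ^ 2 ≤ 1 := by
  rw [exp_neg_sq_div_two_sq_sq, exp_le_one_iff, neg_nonpos]
  positivity

theorem one_sub_sq_exp_neg_sq_div_two_sq_le (D h : ℝ) :
    1 - exp (-D ^ 2 / (2 * h ^ 2)) ^ 2 ≤ D ^ 2 / h ^ 2 := by
  rw [exp_neg_sq_div_two_sq_sq]
  linarith [one_sub_le_exp_neg (D ^ 2 / h ^ 2)]

theorem posterior_variance_se_kernel_general
    (s : ℕ) (hs : 1 ≤ s) (κ₀ η h D : ℝ) (hκ : 0 < κ₀) :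
    κ₀ - κ₀ ^ 2 * Real.exp (-D ^ 2 / (2 * h ^ 2)) ^ 2 * (s : ℝ) / (η ^ 2 + κ₀ * (s : ℝ))
      ≤ (κ₀ / h ^ 2) * D ^ 2 + η ^ 2 / (s : ℝ) := by
  have hs₀ : (0 : ℝ) < s := by exact_mod_cast hs
  calc _ ≤ κ₀ * (1 - exp (-D ^ 2 / (2 * h ^ 2)) ^ 2) + η ^ 2 / s :=
        posterior_variance_le_of_sq_le_one hκ hs₀ (sq_exp_neg_sq_div_two_sq_le_one D h)
    _ ≤ κ₀ * (D ^ 2 / h ^ 2) + η ^ 2 / s := by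
        gcongr
        exact one_sub_sq_exp_neg_sq_div_two_sq_le D h
    _ = (κ₀ / h ^ 2) * D ^ 2 + η ^ 2 / s := by ring

/-- **Squared exponential case of Lemma 7.**
For `s ≥ 1`, `κ₀ > 0`, `η > 0`, `h > 0`, `D ≥ 0` and `φ = exp(−D²/(2h²))`,
`κ₀ − κ₀² φ² s / (η² + κ₀ s) ≤ (κ₀/h²) D² + η²/s`. -/
theorem posterior_variance_se_kernel
    (s : ℕ) (hs : 1 ≤ s) (κ₀ η h D : ℝ) (hκ : 0 < κ₀) (hη : 0 < η)
    (hh : 0 < h) (hD : 0 ≤ D) :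
    κ₀ - κ₀ ^ 2 * Real.exp (-D ^ 2 / (2 * h ^ 2)) ^ 2 * (s : ℝ) / (η ^ 2 + κ₀ * (s : ℝ))
      ≤ (κ₀ / h ^ 2) * D ^ 2 + η ^ 2 / (s : ℝ) :=
  posterior_variance_se_kernel_general s hs κ₀ η h D hκ
end

section
/- Let s ≥ 1 be an integer, let κ₀ > 0, η > 0, L ≥ 0, D ≥ 0 be reals, and let φ : ℝ → ℝ be an L-Lipschitz function with φ(0) = 1 and |φ(t)| ≤ 1 for all t ≥ 0. Then κ₀ − κ₀² φ(D)² s / (η² + κ₀ s) ≤ 2 κ₀ L D + η²/s. -/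
/-!
The posterior variance splits as `κ₀ (1 - ρ²) · κ₀s/(η² + κ₀s) + κ₀η²/(η² + κ₀s)`: the first factor
`κ₀s/(η² + κ₀s)` is at most `1` and the noise term is at most `η²/s`. With `ρ = φ(D)`, Lipschitz
continuity at `0` gives `|1 - φ(D)| ≤ LD`, so `1 - φ(D)² = (1 - φ(D))(1 + φ(D)) ≤ 2LD`.
-/

/-- Posterior variance at a test point of a Gaussian process with prior variance `κ₀`, after `s`
observations with noise variance `η²` at a single point whose prior correlation with the test point
is `ρ`. -/
noncomputable def gpPosteriorVariance (κ₀ ρ η s : ℝ) : ℝ :=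
  κ₀ - κ₀ ^ 2 * ρ ^ 2 * s / (η ^ 2 + κ₀ * s)

theorem gpPosteriorVariance_le {κ₀ ρ η s : ℝ} (hκ : 0 < κ₀) (hs : 0 < s) (hρ : |ρ| ≤ 1) :
    gpPosteriorVariance κ₀ ρ η s ≤ κ₀ * (1 - ρ ^ 2) + η ^ 2 / s := by
  have hden : 0 < η ^ 2 + κ₀ * s := by positivity
  have hρsq : ρ ^ 2 ≤ 1 := (sq_le_one_iff_abs_le_one ρ).2 hρ
  have hsplit : gpPosteriorVariance κ₀ ρ η s
      = κ₀ * (1 - ρ ^ 2) * (κ₀ * s / (η ^ 2 + κ₀ * s)) + η ^ 2 * (κ₀ / (η ^ 2 + κ₀ * s)) := by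
    unfold gpPosteriorVariance
    field_simp
    ring
  have hshrink : κ₀ * s / (η ^ 2 + κ₀ * s) ≤ 1 :=
    (div_le_one hden).2 (le_add_of_nonneg_left (sq_nonneg η))
  have hnoise : κ₀ / (η ^ 2 + κ₀ * s) ≤ 1 / s := by
    rw [div_le_div_iff₀ hden hs]
    nlinarith [sq_nonneg η]
  rw [hsplit, div_eq_mul_one_div (η ^ 2)]
  have hcorr : 0 ≤ κ₀ * (1 - ρ ^ 2) := mul_nonneg hκ.le (sub_nonneg.2 hρsq)
  exact add_le_add (mul_le_of_le_one_right hcorr hshrink)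
    (mul_le_mul_of_nonneg_left hnoise (sq_nonneg η))

theorem one_sub_sq_le_two_mul {x c : ℝ} (hx : |x| ≤ 1) (h : |1 - x| ≤ c) : 1 - x ^ 2 ≤ 2 * c := by
  obtain ⟨hx₁, hx₂⟩ := abs_le.mp hx
  obtain ⟨h₁, h₂⟩ := abs_le.mp h
  nlinarith

theorem posterior_variance_lipschitz_kernel_general
    (s : ℕ) (hs : 1 ≤ s) (κ₀ η L D : ℝ) (hκ : 0 < κ₀)
    (hD : 0 ≤ D) (φ : ℝ → ℝ)
    (hφLip : ∀ a b : ℝ, |φ a - φ b| ≤ L * |a - b|)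
    (hφ0 : φ 0 = 1) (hφle : ∀ t : ℝ, 0 ≤ t → |φ t| ≤ 1) :
    κ₀ - κ₀ ^ 2 * (φ D) ^ 2 * (s : ℝ) / (η ^ 2 + κ₀ * (s : ℝ))
      ≤ 2 * κ₀ * L * D + η ^ 2 / (s : ℝ) := by
  have hφD : |φ D| ≤ 1 := hφle D hD
  have hdecay : |1 - φ D| ≤ L * D := by simpa [hφ0, abs_of_nonneg hD] using hφLip 0 D
  calc gpPosteriorVariance κ₀ (φ D) η s
      ≤ κ₀ * (1 - φ D ^ 2) + η ^ 2 / s := gpPosteriorVariance_le hκ (by positivity) hφD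
    _ ≤ κ₀ * (2 * (L * D)) + η ^ 2 / s := by gcongr; exact one_sub_sq_le_two_mul hφD hdecay
    _ = 2 * κ₀ * L * D + η ^ 2 / s := by ring

/-- **Matérn (Lipschitz correlation) case of Lemma 7.**
Let `s ≥ 1`, `κ₀ > 0`, `η > 0`, `L ≥ 0`, `D ≥ 0`, and let `φ : ℝ → ℝ` be
`L`-Lipschitz with `φ(0) = 1` and `|φ(t)| ≤ 1` for all `t ≥ 0`. Then
`κ₀ − κ₀² φ(D)² s / (η² + κ₀ s) ≤ 2 κ₀ L D + η²/s`. -/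
theorem posterior_variance_lipschitz_kernel
    (s : ℕ) (hs : 1 ≤ s) (κ₀ η L D : ℝ) (hκ : 0 < κ₀) (hη : 0 < η)
    (hL : 0 ≤ L) (hD : 0 ≤ D) (φ : ℝ → ℝ)
    (hφLip : ∀ a b : ℝ, |φ a - φ b| ≤ L * |a - b|)
    (hφ0 : φ 0 = 1) (hφle : ∀ t : ℝ, 0 ≤ t → |φ t| ≤ 1) :
    κ₀ - κ₀ ^ 2 * (φ D) ^ 2 * (s : ℝ) / (η ^ 2 + κ₀ * (s : ℝ))
      ≤ 2 * κ₀ * L * D + η ^ 2 / (s : ℝ) :=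
  posterior_variance_lipschitz_kernel_general s hs κ₀ η L D hκ hD φ hφLip hφ0 hφle
end
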